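/- arXiv:2105.06531 — 2 statements merged into one kernel-verified Lean document; each statement's English description precedes it below -/
import Mathlib

section
/- Let D be a diagram with r = rank(D). Then there exists a strictly increasing chain of diagrams C^0 < C^1 < ... < C^{r-1} < D (with respect to the componentwise order on diagrams) such that rank(C^k) = k for each k = 0, 1, ..., r-1. -/
open Finset

/-- `colLE R S`: `R ≤ S` for columns, i.e. `|R| = |S|` and the `k`-th least element of `R`
does not exceed the `k`-th least element of `S` for each `k`. -/
def colLE {α : Type*} [LinearOrder α] (R S : Finset α) : Prop :=
  R.card = S.card ∧
  ∀ (k : ℕ) (hR : k < (R.sort (· ≤ ·)).length) (hS : k < (S.sort (· ≤ ·)).length),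
    (R.sort (· ≤ ·)).get ⟨k, hR⟩ ≤ (S.sort (· ≤ ·)).get ⟨k, hS⟩

/-- Rank of a single column `S ⊆ [n] = {1,…,n}`:
`Σ_{i ∈ S} #{k : 1 ≤ k ≤ i, k ∉ S}`. -/
def colRank (S : Finset ℕ) : ℕ :=
  ∑ i ∈ S, ((Finset.Icc 1 i).filter (fun k => k ∉ S)).card

/-- Columnwise order on diagrams. -/
def diagLE {n : ℕ} (C D : Fin n → Finset ℕ) : Prop := ∀ j, colLE (C j) (D j)

/-- Strict columnwise order on diagrams. -/
def diagLT {n : ℕ} (C D : Fin n → Finset ℕ) : Prop := diagLE C D ∧ C ≠ D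

/-- Rank of a diagram: sum of the ranks of its columns. -/
def diagRank {n : ℕ} (D : Fin n → Finset ℕ) : ℕ := ∑ j, colRank (D j)

/-- The monomial `x^C`, as the exponent function recording for each row `i`
the number of boxes of `C` in row `i`. -/
def xMon {n : ℕ} (C : Fin n → Finset ℕ) : ℕ → ℕ :=
  fun i => (Finset.univ.filter (fun j => i ∈ C j)).card

/-!
A column of positive rank has a box in some row `j + 1 ≥ 2` whose row `j` is empty. Moving that
box up, i.e. applying the transposition `(j j+1)` to the column, is monotone on the column, so it
gives a smaller column, and it destroys exactly one of the inversions counted by the rank: the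
pair formed by the box and the empty cell above it. Repeating this in any column of positive rank
walks down from `D` to rank `0` one step at a time.
-/

lemma colLE_map_of_strictMonoOn {α : Type*} [LinearOrder α] {S : Finset α} (f : α ↪ α)
    (hf : StrictMonoOn f S) (hle : ∀ x ∈ S, f x ≤ x) : colLE (S.map f) S := by
  refine ⟨card_map f, fun k hR hS => ?_⟩
  simp only [← hf.map_finsetSort, List.get_eq_getElem, List.getElem_map]
  exact hle _ ((mem_sort _).1 (List.getElem_mem _))

lemma colLE_refl {α : Type*} [LinearOrder α] (S : Finset α) : colLE S S :=
  ⟨rfl, fun _ _ _ => le_rfl⟩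

lemma colLE_trans {α : Type*} [LinearOrder α] {R S T : Finset α} (hRS : colLE R S)
    (hST : colLE S T) : colLE R T := by
  refine ⟨hRS.1.trans hST.1, fun k hR hT => ?_⟩
  have hS : k < (S.sort (· ≤ ·)).length := by
    rw [length_sort] at hR ⊢; rwa [← hRS.1]
  exact (hRS.2 k hR hS).trans (hST.2 k hS hT)

section Column

open Equiv

variable {S : Finset ℕ} {j : ℕ}

lemma swap_succ_apply_of_mem (hj : j ∉ S) {x : ℕ} (hx : x ∈ S) :
    swap j (j + 1) x = if x = j + 1 then j else x := by
  have : x ≠ j := ne_of_mem_of_not_mem hx hj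
  rw [swap_apply_def]
  split_ifs <;> omega

lemma colLE_map_swap_succ (hj : j ∉ S) : colLE (S.map (swap j (j + 1)).toEmbedding) S := by
  refine colLE_map_of_strictMonoOn _ (fun a ha b hb hab => ?_) (fun x hx => ?_)
  · have ha' := ne_of_mem_of_not_mem ha hj
    have hb' := ne_of_mem_of_not_mem hb hj
    simp only [Equiv.coe_toEmbedding, swap_succ_apply_of_mem hj ha, swap_succ_apply_of_mem hj hb]
    split_ifs <;> omega
  · simp only [Equiv.coe_toEmbedding, swap_succ_apply_of_mem hj hx]
    split_ifs <;> omega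

lemma map_swap_succ_ne (hj : j ∉ S) (hj1 : j + 1 ∈ S) :
    S.map (swap j (j + 1)).toEmbedding ≠ S := by
  intro h
  apply hj
  rw [← h, mem_map_equiv, symm_swap, swap_apply_left]
  exact hj1

lemma filter_notMem_map_swap_succ (h1 : 1 ≤ j) {x : ℕ} (hx : x ≠ j) :
    (Icc 1 x).filter (· ∉ S.map (swap j (j + 1)).toEmbedding) =
      ((Icc 1 x).filter (· ∉ S)).map (swap j (j + 1)).toEmbedding := by
  ext k
  simp only [mem_filter, mem_Icc, mem_map_equiv, symm_swap, swap_apply_def]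
  split_ifs <;> grind

lemma filter_notMem_succ_eq_insert (h1 : 1 ≤ j) (hj : j ∉ S) (hj1 : j + 1 ∈ S) :
    (Icc 1 (j + 1)).filter (· ∉ S) =
      insert j ((Icc 1 j).filter (· ∉ S.map (swap j (j + 1)).toEmbedding)) := by
  ext k
  simp only [mem_filter, mem_Icc, mem_insert, mem_map_equiv, symm_swap, swap_apply_def]
  split_ifs <;> grind

lemma colRank_map_swap_succ (h1 : 1 ≤ j) (hj : j ∉ S) (hj1 : j + 1 ∈ S) :
    colRank (S.map (swap j (j + 1)).toEmbedding) + 1 = colRank S := by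
  set σ := (swap j (j + 1)).toEmbedding
  have hrest : ∀ x ∈ S.erase (j + 1),
      ((Icc 1 (σ x)).filter (· ∉ S.map σ)).card = ((Icc 1 x).filter (· ∉ S)).card := by
    intro x hx
    have hxj : x ≠ j := ne_of_mem_of_not_mem (mem_of_mem_erase hx) hj
    have hσx : σ x = x := swap_apply_of_ne_of_ne hxj (ne_of_mem_erase hx)
    rw [hσx, filter_notMem_map_swap_succ h1 hxj, card_map]
  have htop : ((Icc 1 (j + 1)).filter (· ∉ S)).card =
      ((Icc 1 (σ (j + 1))).filter (· ∉ S.map σ)).card + 1 := by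
    rw [filter_notMem_succ_eq_insert h1 hj hj1, card_insert_of_notMem (by simp [hj1])]
    simp [σ]
  unfold colRank
  rw [sum_map, ← sum_erase_add _ _ hj1, ← sum_erase_add _ _ hj1, sum_congr rfl hrest, htop,
    add_assoc]

lemma exists_notMem_succ_mem_of_colRank_ne_zero (h : colRank S ≠ 0) :
    ∃ j, 1 ≤ j ∧ j ∉ S ∧ j + 1 ∈ S := by
  obtain ⟨x, hx, hgap⟩ := exists_ne_zero_of_sum_ne_zero h
  obtain ⟨k, hk⟩ := card_ne_zero.1 hgap
  rw [mem_filter, mem_Icc] at hk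
  obtain ⟨m, hm, hm1⟩ := Nat.exists_not_and_succ_of_not_zero_of_exists (p := (k + · ∈ S))
    hk.2 ⟨x - k, by rwa [Nat.add_sub_cancel' hk.1.2]⟩
  exact ⟨k + m, by omega, hm, hm1⟩

lemma map_swap_succ_subset_Icc {n : ℕ} (h1 : 1 ≤ j) (hj : j ∉ S) (hj1 : j + 1 ∈ S)
    (hS : S ⊆ Icc 1 n) :
    S.map (swap j (j + 1)).toEmbedding ⊆ Icc 1 n := by
  intro x hx
  rw [mem_map_equiv, symm_swap] at hx
  have := mem_Icc.1 (hS hj1)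
  rw [swap_apply_def] at hx
  split_ifs at hx with hxj hxj1
  · exact mem_Icc.2 ⟨by omega, by omega⟩
  · exact absurd hx hj
  · exact hS hx

lemma exists_colLE_colRank_add_one {n : ℕ} (hS : S ⊆ Icc 1 n) (h : colRank S ≠ 0) :
    ∃ T ⊆ Icc 1 n, colLE T S ∧ T ≠ S ∧ colRank T + 1 = colRank S := by
  obtain ⟨j, h1, hj, hj1⟩ := exists_notMem_succ_mem_of_colRank_ne_zero h
  exact ⟨_, map_swap_succ_subset_Icc h1 hj hj1 hS, colLE_map_swap_succ hj,
    map_swap_succ_ne hj hj1, colRank_map_swap_succ h1 hj hj1⟩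

end Column

section Diagram

variable {n : ℕ}

lemma diagLE_trans {A B C : Fin n → Finset ℕ} (hAB : diagLE A B) (hBC : diagLE B C) :
    diagLE A C :=
  fun j => colLE_trans (hAB j) (hBC j)

lemma diagRank_update_add (D : Fin n → Finset ℕ) (c : Fin n) (T : Finset ℕ) :
    diagRank (Function.update D c T) + colRank (D c) = diagRank D + colRank T := by
  unfold diagRank
  rw [← add_sum_erase _ _ (mem_univ c), ← add_sum_erase _ _ (mem_univ c),
    sum_congr rfl fun j hj => by rw [Function.update_of_ne (ne_of_mem_erase hj)],
    Function.update_self]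
  ring

lemma exists_diagLT_diagRank_add_one {D : Fin n → Finset ℕ} (hD : ∀ j, D j ⊆ Icc 1 n)
    (h : diagRank D ≠ 0) :
    ∃ C : Fin n → Finset ℕ, (∀ j, C j ⊆ Icc 1 n) ∧ diagLT C D ∧ diagRank C + 1 = diagRank D := by
  obtain ⟨c, -, hc⟩ := exists_ne_zero_of_sum_ne_zero h
  obtain ⟨T, hTn, hTD, hne, hrank⟩ := exists_colLE_colRank_add_one (hD c) hc
  refine ⟨Function.update D c T, fun j => ?_, ⟨fun j => ?_, fun he => hne ?_⟩, ?_⟩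
  · rcases eq_or_ne j c with rfl | hj
    · rwa [Function.update_self]
    · rw [Function.update_of_ne hj]; exact hD j
  · rcases eq_or_ne j c with rfl | hj
    · rwa [Function.update_self]
    · rw [Function.update_of_ne hj]; exact colLE_refl _
  · simpa using congrFun he c
  · have := diagRank_update_add D c T
    omega

theorem exists_chain_of_diagRank_eq (r : ℕ) :
    ∀ D : Fin n → Finset ℕ, (∀ j, D j ⊆ Icc 1 n) → diagRank D = r →
      ∃ C : Fin r → (Fin n → Finset ℕ),
        (∀ k, ∀ j, C k j ⊆ Icc 1 n) ∧
        (∀ k, diagRank (C k) = (k : ℕ)) ∧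
        (∀ k l, k < l → diagLT (C k) (C l)) ∧
        (∀ k, diagLT (C k) D) := by
  induction r with
  | zero => exact fun _ _ _ => ⟨Fin.elim0, nofun, nofun, nofun, nofun⟩
  | succ r ih =>
    intro D hD hrank
    obtain ⟨E, hEn, hED, hErank⟩ := exists_diagLT_diagRank_add_one hD (by omega)
    have hEr : diagRank E = r := by omega
    obtain ⟨C, hCn, hCrank, hCchain, hCE⟩ := ih E hEn hEr
    have hCD (k : Fin r) : diagLT (C k) D :=
      ⟨diagLE_trans (hCE k).1 hED.1, ne_of_apply_ne diagRank (by rw [hCrank, hrank]; omega)⟩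
    refine ⟨Fin.snoc C E, ?_, ?_, ?_, ?_⟩
    · intro k
      induction k using Fin.lastCases <;> simp [hCn, hEn]
    · intro k
      induction k using Fin.lastCases <;> simp [hCrank, hEr]
    · intro k l hkl
      induction k using Fin.lastCases with
      | last => exact absurd hkl (Fin.le_last l).not_gt
      | cast k =>
        induction l using Fin.lastCases with
        | last => simpa using hCE k
        | cast l => simpa using hCchain k l (by simpa using hkl)
    · intro k
      induction k using Fin.lastCases <;> simp [hCD, hED]

end Diagram

/-- There is a strictly increasing chain `C⁰ < C¹ < ⋯ < C^{r-1} < D`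
with `rank(Cᵏ) = k`, where `r = rank(D)`. -/
theorem stmt_1 (n : ℕ) (D : Fin n → Finset ℕ) (hD : ∀ j, D j ⊆ Finset.Icc 1 n) :
    ∃ C : Fin (diagRank D) → (Fin n → Finset ℕ),
      (∀ k, ∀ j, C k j ⊆ Finset.Icc 1 n) ∧
      (∀ k, diagRank (C k) = (k : ℕ)) ∧
      (∀ k l, k < l → diagLT (C k) (C l)) ∧
      (∀ k, diagLT (C k) D) :=
  exists_chain_of_diagRank_eq _ D hD rfl
end

section
/- If C and D are diagrams with C ≤ D and C ≠ D, then rank(C) < rank(D). -/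
open Finset

/-!
In a column `S ⊆ {1, 2, …}` the `k`-th smallest element `s_k` has exactly `k` elements of `S`
in `{1, …, s_k}`, so `rank S = Σ_k (s_k - k) = Σ S - (|S| + 1).choose 2`. Dominance `R ≤ S`
compares the sorted lists termwise, hence `Σ R ≤ Σ S`, with equality only when the two lists,
and so the two columns, coincide. Summing over the columns gives the theorem.
-/

namespace Finset

variable {α : Type*} [LinearOrder α]

lemma card_filter_le_orderEmbOfFin (S : Finset α) {m : ℕ} (h : #S = m) (k : Fin m) :
    #{x ∈ S | x ≤ S.orderEmbOfFin h k} = k + 1 := by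
  have hfilter :
      {x ∈ S | x ≤ S.orderEmbOfFin h k} = (Iic k).map (S.orderEmbOfFin h).toEmbedding := by
    ext x
    simp only [mem_filter, mem_map, mem_Iic, RelEmbedding.coe_toEmbedding]
    constructor
    · rintro ⟨hx, hxk⟩
      obtain ⟨j, rfl⟩ : x ∈ Set.range (S.orderEmbOfFin h) := by simpa using hx
      exact ⟨j, by simpa using hxk, rfl⟩
    · rintro ⟨j, hj, rfl⟩
      exact ⟨S.orderEmbOfFin_mem h j, by simpa using hj⟩
  rw [hfilter, card_map, Fin.card_Iic]

lemma sum_card_filter_le (S : Finset α) :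
    ∑ i ∈ S, #{x ∈ S | x ≤ i} = (#S + 1).choose 2 := by
  have hreindex := sum_map univ (S.orderEmbOfFin rfl).toEmbedding fun i => #{x ∈ S | x ≤ i}
  rw [map_orderEmbOfFin_univ] at hreindex
  simp only [hreindex, RelEmbedding.coe_toEmbedding, card_filter_le_orderEmbOfFin]
  rw [Fin.sum_univ_eq_sum_range (fun k => k + 1), Nat.choose_two_right, ← sum_range_id,
    sum_range_succ', add_zero]

end Finset

lemma colRank_add_choose_two (S : Finset ℕ) (hS : 0 ∉ S) :
    colRank S + (#S + 1).choose 2 = ∑ i ∈ S, i := by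
  rw [colRank, ← sum_card_filter_le, ← sum_add_distrib]
  refine sum_congr rfl fun i _ => ?_
  have hmem : {x ∈ Icc 1 i | x ∈ S} = {x ∈ S | x ≤ i} := by
    ext x
    simp only [mem_filter, mem_Icc]
    have : x ∈ S → 1 ≤ x := fun hx => Nat.one_le_iff_ne_zero.mpr (ne_of_mem_of_not_mem hx hS)
    tauto
  rw [← hmem, add_comm, card_filter_add_card_filter_not, Nat.card_Icc, Nat.add_sub_cancel]

namespace colLE

variable {α : Type*} [LinearOrder α] {R S : Finset α}

lemma orderEmbOfFin_le (h : colLE R S) (k : Fin #R) :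
    R.orderEmbOfFin rfl k ≤ S.orderEmbOfFin h.1.symm k := by
  rw [orderEmbOfFin_apply, orderEmbOfFin_apply]
  exact h.2 k (by simp) (by simp [← h.1])

lemma sum_lt [AddCommMonoid α] [IsOrderedCancelAddMonoid α] (h : colLE R S) (hne : R ≠ S) :
    ∑ x ∈ R, x < ∑ x ∈ S, x := by
  conv_lhs => rw [← R.map_orderEmbOfFin_univ rfl]
  conv_rhs => rw [← S.map_orderEmbOfFin_univ h.1.symm]
  simp only [sum_map, RelEmbedding.coe_toEmbedding]
  refine sum_lt_sum (fun k _ => h.orderEmbOfFin_le k) ?_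
  by_contra! hge
  apply hne
  have hfun : ⇑(R.orderEmbOfFin rfl) = S.orderEmbOfFin h.1.symm :=
    funext fun k => (h.orderEmbOfFin_le k).antisymm (hge k (mem_univ k))
  rw [← R.image_orderEmbOfFin_univ rfl, ← S.image_orderEmbOfFin_univ h.1.symm, hfun]

end colLE

lemma colRank_lt_of_colLE {R S : Finset ℕ} (hR : 0 ∉ R) (hS : 0 ∉ S) (h : colLE R S)
    (hne : R ≠ S) : colRank R < colRank S := by
  have hsum := h.sum_lt hne
  have hR' := colRank_add_choose_two R hR
  have hS' := colRank_add_choose_two S hS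
  rw [h.1] at hR'
  omega

lemma colRank_le_of_colLE {R S : Finset ℕ} (hR : 0 ∉ R) (hS : 0 ∉ S) (h : colLE R S) :
    colRank R ≤ colRank S := by
  rcases eq_or_ne R S with rfl | hne
  exacts [le_rfl, (colRank_lt_of_colLE hR hS h hne).le]

/-- If `C ≤ D` and `C ≠ D` then `rank(C) < rank(D)`. -/
theorem stmt_11 (n : ℕ) (C D : Fin n → Finset ℕ)
    (hC : ∀ j, C j ⊆ Finset.Icc 1 n) (hD : ∀ j, D j ⊆ Finset.Icc 1 n)
    (hle : diagLE C D) (hne : C ≠ D) : diagRank C < diagRank D := by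
  have zero_notMem {T : Finset ℕ} (hT : T ⊆ Icc 1 n) : 0 ∉ T := fun h0 => by
    simpa using hT h0
  obtain ⟨j, hj⟩ := Function.ne_iff.mp hne
  exact sum_lt_sum
    (fun i _ => colRank_le_of_colLE (zero_notMem (hC i)) (zero_notMem (hD i)) (hle i))
    ⟨j, mem_univ j, colRank_lt_of_colLE (zero_notMem (hC j)) (zero_notMem (hD j)) (hle j) hj⟩
end
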